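/- For the recursion δ(k+1) = δ(k) − c₁ sat(δ(k)/c₂) with 0 < c₂ < c₁ < 2c₂: the interval [−c₂, c₂] is reached in finitely many steps from any initial δ(0), and is forward invariant; specifically if δ(k) ≥ c₂ then δ(k+1) = δ(k) − c₁ < δ(k), and once |δ(k)| ≤ c₂ then |δ(j)| ≤ c₂ for all j ≥ k. -/

import Mathlib

/-- The standard saturation function. -/
noncomputable def sat (r : ℝ) : ℝ :=
  if r > 1 then 1 else if r < -1 then -1 else r

/-!
Outside `[-c₂, c₂]` the saturated step moves `δ` by exactly `c₁` towards the origin, and since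
`c₁ < 2 c₂` it cannot jump over the interval; inside, the step is multiplication by
`1 - c₁ / c₂ ∈ [-1, 1]`. Hence `|δ (k + 1)| ≤ max c₂ (|δ k| - c₁)` for every `k`, which gives both
forward invariance of `|δ| ≤ c₂` and, by the Archimedean property, that it is reached.
-/

lemma sat_of_one_le {r : ℝ} (h : 1 ≤ r) : sat r = 1 := by
  unfold sat; split_ifs <;> linarith

lemma sat_of_le_neg_one {r : ℝ} (h : r ≤ -1) : sat r = -1 := by
  unfold sat; split_ifs <;> linarith

lemma sat_of_abs_le_one {r : ℝ} (h : |r| ≤ 1) : sat r = r := by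
  rw [abs_le] at h
  unfold sat; split_ifs <;> linarith

section SequenceBound

variable {u : ℕ → ℝ} {b ε : ℝ}

lemma le_of_le_max_sub_of_le (hε : 0 ≤ ε) (hu : ∀ k, u (k + 1) ≤ max b (u k - ε))
    {k j : ℕ} (hk : u k ≤ b) (hkj : k ≤ j) : u j ≤ b := by
  induction j, hkj using Nat.le_induction with
  | base => exact hk
  | succ j _ ih => exact (hu j).trans (max_le le_rfl (by linarith))

lemma exists_le_of_le_max_sub (hε : 0 < ε) (hu : ∀ k, u (k + 1) ≤ max b (u k - ε)) :
    ∃ k, u k ≤ b := by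
  by_contra! hgt
  have hdesc : ∀ k : ℕ, u k ≤ u 0 - k * ε := by
    intro k
    induction k with
    | zero => simp
    | succ k ih =>
      have hstep : u (k + 1) ≤ u k - ε := (le_max_iff.1 (hu k)).resolve_left (hgt _).not_ge
      push_cast
      linarith
  obtain ⟨n, hn⟩ := exists_nat_gt ((u 0 - b) / ε)
  rw [div_lt_iff₀ hε] at hn
  linarith [hdesc n, hgt n]

end SequenceBound

section SatStep

variable {c₁ c₂ x : ℝ}

noncomputable def satStep (c₁ c₂ x : ℝ) : ℝ := x - c₁ * sat (x / c₂)

lemma satStep_of_le (hc₂ : 0 < c₂) (hx : c₂ ≤ x) : satStep c₁ c₂ x = x - c₁ := by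
  rw [satStep, sat_of_one_le ((one_le_div hc₂).2 hx), mul_one]

lemma satStep_of_le_neg (hc₂ : 0 < c₂) (hx : x ≤ -c₂) : satStep c₁ c₂ x = x + c₁ := by
  rw [satStep, sat_of_le_neg_one ((div_le_iff₀ hc₂).2 (by linarith)), mul_neg_one,
    sub_neg_eq_add]

lemma satStep_of_abs_le (hc₂ : 0 < c₂) (hx : |x| ≤ c₂) :
    satStep c₁ c₂ x = (1 - c₁ / c₂) * x := by
  rw [satStep, sat_of_abs_le_one (by rwa [abs_div, abs_of_pos hc₂, div_le_one hc₂])]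
  ring

lemma abs_satStep_le (hc₂ : 0 < c₂) (hc₁ : 0 ≤ c₁) (hc₁₂ : c₁ ≤ 2 * c₂) (hx : |x| ≤ c₂) :
    |satStep c₁ c₂ x| ≤ c₂ := by
  have hgain : |1 - c₁ / c₂| ≤ 1 := by
    have : c₁ / c₂ ≤ 2 := (div_le_iff₀ hc₂).2 (by linarith)
    exact abs_le.2 ⟨by linarith, by linarith [div_nonneg hc₁ hc₂.le]⟩
  calc |satStep c₁ c₂ x| = |1 - c₁ / c₂| * |x| := by rw [satStep_of_abs_le hc₂ hx, abs_mul]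
    _ ≤ 1 * c₂ := mul_le_mul hgain hx (abs_nonneg x) zero_le_one
    _ = c₂ := one_mul c₂

lemma abs_satStep_le_max (hc₂ : 0 < c₂) (hc₁ : 0 ≤ c₁) (hc₁₂ : c₁ ≤ 2 * c₂) (x : ℝ) :
    |satStep c₁ c₂ x| ≤ max c₂ (|x| - c₁) := by
  rcases le_or_gt |x| c₂ with hx | hx
  · exact (abs_satStep_le hc₂ hc₁ hc₁₂ hx).trans (le_max_left _ _)
  rcases lt_abs.1 hx with hx | hx
  · rw [satStep_of_le hc₂ hx.le, abs_of_pos (by linarith : 0 < x)]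
    exact abs_le.2 ⟨by linarith [le_max_left c₂ (x - c₁)], le_max_right _ _⟩
  · rw [satStep_of_le_neg hc₂ (by linarith), abs_of_neg (by linarith : x < 0)]
    exact abs_le.2 ⟨by linarith [le_max_right c₂ (-x - c₁)], by linarith [le_max_left c₂ (-x - c₁)]⟩

end SatStep

/-- For the recursion `δ(k+1) = δ(k) - c₁ sat(δ(k)/c₂)` with `0 < c₂ < c₁ < 2c₂`:
if `δ(k) ≥ c₂` then `δ(k+1) = δ(k) - c₁ < δ(k)`; the interval `[-c₂, c₂]` is
forward invariant; and it is reached in finitely many steps from any `δ(0)`. -/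
theorem stmt10 (c₁ c₂ : ℝ) (h1 : 0 < c₂) (h2 : c₂ < c₁) (h3 : c₁ < 2 * c₂)
    (δ : ℕ → ℝ) (hrec : ∀ k, δ (k + 1) = δ k - c₁ * sat (δ k / c₂)) :
    (∀ k, c₂ ≤ δ k → δ (k + 1) = δ k - c₁ ∧ δ (k + 1) < δ k) ∧
      (∀ k, |δ k| ≤ c₂ → ∀ j, k ≤ j → |δ j| ≤ c₂) ∧
      (∃ k, |δ k| ≤ c₂) := by
  have hc₁ : 0 < c₁ := h1.trans h2
  have hcontract : ∀ k, |δ (k + 1)| ≤ max c₂ (|δ k| - c₁) := fun k => by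
    rw [hrec k]
    exact abs_satStep_le_max h1 hc₁.le h3.le (δ k)
  refine ⟨fun k hk => ?_, fun k hk j hkj => ?_, exists_le_of_le_max_sub hc₁ hcontract⟩
  · have hstep : δ (k + 1) = δ k - c₁ := (hrec k).trans (satStep_of_le h1 hk)
    exact ⟨hstep, by linarith⟩
  · exact le_of_le_max_sub_of_le (u := fun k => |δ k|) hc₁.le hcontract hk hkj
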